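/- arXiv:2111.15485 — 3 statements merged into one kernel-verified Lean document; each statement's English description precedes it below -/
import Mathlib

section
/- Let h be a positive integer and let φ(x_1,…,x_h) = c_1x_1 + ⋯ + c_hx_h be a linear form with integer coefficients satisfying condition N. Then for every sequence b_1, b_2, b_3, … of integers there exists a sequence a_1, a_2, a_3, … of pairwise distinct integers such that the set A = {a_k : k = 1, 2, 3, …} is a φ-Sidon set and |a_k − b_k| < k^(4h) holds for all positive integers k. -/
/-- `A` is a Sidon set for the linear form `φ(x₁,…,x_h) = c₁x₁ + ⋯ + c_hx_h`
with integer coefficients `c`. -/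
def IsSidon {h : ℕ} (c : Fin h → ℤ) (A : Set ℤ) : Prop :=
  ∀ a a' : Fin h → ℤ, (∀ i, a i ∈ A) → (∀ i, a' i ∈ A) →
    (∑ i, c i * a i) = (∑ i, c i * a' i) → a = a'

/-- The linear form with coefficients `c` satisfies condition N: there do not exist
disjoint subsets `I₁, I₂` of `{1,…,h}`, not both empty, with equal subset sums. -/
def ConditionN {h : ℕ} (c : Fin h → ℤ) : Prop :=
  ¬ ∃ I₁ I₂ : Finset (Fin h), Disjoint I₁ I₂ ∧ (I₁.Nonempty ∨ I₂.Nonempty) ∧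
      ∑ i ∈ I₁, c i = ∑ i ∈ I₂, c i

/-!
Build the sequence greedily: `a_k` is any integer with `|a_k - b_k| < (k+1)^(4h)` that keeps
`{a_0, …, a_k}` a φ-Sidon set and is new. Let `A` be φ-Sidon and take a collision
`∑ c (S.piecewise r x) = ∑ c (T.piecewise r y)` in `A ∪ {r}`, where `x, y` are tuples over `A`
and `S`, `T` are the positions of `r`. If `∑_S c = ∑_T c`, condition N gives `S = T`, and then
replacing `r` by an element of `A` gives a collision in `A`, which must be trivial. Otherwise the
collision is linear in `r` with nonzero leading coefficient, so `r` is determined by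
`(x, y, S, T)`. Hence at most `|A| + (4|A|²)^h` values are excluded, fewer than the
`2(k+1)^(4h) - 1` candidates for `a_k`.
-/

open Finset

section Greedy

variable {α : Type*} [DecidableEq α]

def greedyPrefix (next : ℕ → Finset α → α) : ℕ → Finset α
  | 0 => ∅
  | k + 1 => insert (next k (greedyPrefix next k)) (greedyPrefix next k)

theorem exists_injective_greedy {P : Finset α → Prop} {Q : ℕ → α → Prop} (h0 : P ∅)
    (hstep : ∀ k (A : Finset α), P A → #A ≤ k → ∃ r ∉ A, Q k r ∧ P (insert r A)) :
    ∃ a : ℕ → α, Function.Injective a ∧ (∀ k, Q k (a k)) ∧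
      ∀ k, P ((range k).image a) := by
  obtain ⟨r₀, -⟩ := hstep 0 ∅ h0 (by simp)
  have : Nonempty α := ⟨r₀⟩
  choose! next hnext_notMem hnext_Q hnext_P using hstep
  have hs : ∀ k, P (greedyPrefix next k) ∧ #(greedyPrefix next k) ≤ k := by
    intro k
    induction k with
    | zero => exact ⟨h0, by simp [greedyPrefix]⟩
    | succ k ih => exact ⟨hnext_P k _ ih.1 ih.2, (card_insert_le _ _).trans (by omega)⟩
  set a := fun k => next k (greedyPrefix next k)
  have hs_eq : ∀ k, greedyPrefix next k = (range k).image a := by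
    intro k
    induction k with
    | zero => rfl
    | succ k ih => rw [range_add_one, image_insert, ← ih]; rfl
  refine ⟨a, .of_lt_imp_ne fun j k hjk hjk_eq => ?_, fun k => hnext_Q k _ (hs k).1 (hs k).2,
    fun k => hs_eq k ▸ (hs k).1⟩
  have hj : a j ∈ greedyPrefix next k := by
    rw [hs_eq k]
    exact mem_image_of_mem a (mem_range.mpr hjk)
  have hk : a k ∉ greedyPrefix next k := hnext_notMem k _ (hs k).1 (hs k).2
  exact hk (hjk_eq ▸ hj)

end Greedy

theorem exists_abs_sub_lt_notMem (b : ℤ) {N : ℕ} (s : Finset ℤ) (hs : #s + 1 < 2 * N) :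
    ∃ r, |r - b| < N ∧ r ∉ s := by
  obtain ⟨r, hr, hrs⟩ := exists_mem_notMem_of_card_lt_card (s := s) (t := Ioo (b - N) (b + N))
    (by rw [Int.card_Ioo]; omega)
  rw [mem_Ioo] at hr
  exact ⟨r, abs_sub_lt_iff.mpr ⟨by linarith, by linarith⟩, hrs⟩

theorem add_four_mul_sq_pow_add_one_lt {h : ℕ} (hh : 0 < h) (k : ℕ) :
    k + (4 * k ^ 2) ^ h + 1 < 2 * (k + 1) ^ (4 * h) := by
  have hsq : (4 * k ^ 2) ^ h ≤ (k + 1) ^ (4 * h) := by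
    rw [pow_mul]
    refine Nat.pow_le_pow_left ?_ h
    calc 4 * k ^ 2 = (2 * k) ^ 2 := by ring
      _ ≤ ((k + 1) ^ 2) ^ 2 := Nat.pow_le_pow_left (by nlinarith) 2
      _ = (k + 1) ^ 4 := by ring
  rcases k.eq_zero_or_pos with rfl | hk
  · simp [zero_pow hh.ne']
  · have hlt : (k + 1) ^ 1 < (k + 1) ^ (4 * h) := Nat.pow_lt_pow_right (by omega) (by omega)
    rw [pow_one] at hlt
    omega

theorem sum_mul_piecewise_const {ι R : Type*} [Fintype ι] [DecidableEq ι] [CommSemiring R]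
    (c x : ι → R) (S : Finset ι) (t : R) :
    ∑ i, c i * S.piecewise (fun _ => t) x i =
      (∑ i ∈ S, c i) * t + ∑ i ∈ Sᶜ, c i * x i := by
  rw [← sum_add_sum_compl S, sum_mul]
  congr 1 <;> refine sum_congr rfl fun i hi => ?_ <;> simp_all

theorem exists_piecewise_eq_of_forall_mem_insert {ι α : Type*} [Fintype ι] [DecidableEq ι]
    [DecidableEq α] {A : Finset α} {r w : α} (hw : w ∈ A) {u : ι → α}
    (hu : ∀ i, u i ∈ insert r A) :
    ∃ (S : Finset ι) (x : ι → α), (∀ i, x i ∈ A) ∧ u = S.piecewise (fun _ => r) x := by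
  refine ⟨univ.filter (u · = r), fun i => if u i = r then w else u i, fun i => ?_, ?_⟩
  · dsimp only
    split_ifs with hi
    · exact hw
    · exact (mem_insert.mp (hu i)).resolve_left hi
  · ext i
    by_cases hi : u i = r <;> simp [hi]

variable {h : ℕ} {c : Fin h → ℤ}

theorem ConditionN.eq_of_sum_eq (hN : ConditionN c) {S T : Finset (Fin h)}
    (hST : ∑ i ∈ S, c i = ∑ i ∈ T, c i) : S = T := by
  by_contra hne
  refine hN ⟨S \ T, T \ S, disjoint_sdiff_sdiff, ?_, ?_⟩
  · rw [sdiff_nonempty, sdiff_nonempty, ← not_and_or]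
    exact fun hsub => hne (hsub.1.antisymm hsub.2)
  · rw [← sub_eq_zero, sum_sdiff_sub_sum_sdiff, hST, sub_self]

theorem isSidon_empty (c : Fin h → ℤ) : IsSidon c ∅ :=
  fun _ _ hu _ _ => funext fun i => (hu i).elim

theorem isSidon_iUnion {ι : Type*} [Preorder ι] [IsDirectedOrder ι] [Nonempty ι]
    {A : ι → Set ℤ} (hmono : Monotone A) (hA : ∀ n, IsSidon c (A n)) :
    IsSidon c (⋃ n, A n) := by
  classical
  intro u v hu hv huv
  simp only [Set.mem_iUnion] at hu hv
  choose f hf using hu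
  choose g hg using hv
  obtain ⟨N, hN⟩ := (univ.image f ∪ univ.image g).exists_le
  exact hA N u v (fun i => hmono (hN _ (by simp)) (hf i)) (fun i => hmono (hN _ (by simp)) (hg i))
    huv

def collisionValue (c x y : Fin h → ℤ) (S T : Finset (Fin h)) : ℤ :=
  (∑ i ∈ Tᶜ, c i * y i - ∑ i ∈ Sᶜ, c i * x i) / (∑ i ∈ S, c i - ∑ i ∈ T, c i)

theorem eq_collisionValue {x y : Fin h → ℤ} {S T : Finset (Fin h)} {r : ℤ}
    (hST : ∑ i ∈ S, c i ≠ ∑ i ∈ T, c i)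
    (hxy : ∑ i, c i * S.piecewise (fun _ => r) x i = ∑ i, c i * T.piecewise (fun _ => r) y i) :
    r = collisionValue c x y S T := by
  rw [sum_mul_piecewise_const, sum_mul_piecewise_const] at hxy
  rw [collisionValue, eq_comm]
  exact Int.ediv_eq_of_eq_mul_left (sub_ne_zero.mpr hST) (by linear_combination -hxy)

def collisionValues (c : Fin h → ℤ) (A : Finset ℤ) : Finset ℤ :=
  ((Fintype.piFinset fun _ => A) ×ˢ (Fintype.piFinset fun _ => A) ×ˢ univ ×ˢ univ).image
    fun p => collisionValue c p.1 p.2.1 p.2.2.1 p.2.2.2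

theorem card_collisionValues_le (c : Fin h → ℤ) (A : Finset ℤ) :
    #(collisionValues c A) ≤ (4 * #A ^ 2) ^ h := by
  refine card_image_le.trans_eq ?_
  simp only [card_product, Fintype.card_piFinset, prod_const, card_univ, Fintype.card_finset,
    Fintype.card_fin]
  rw [mul_pow, show (4 : ℕ) = 2 * 2 from rfl, mul_pow]
  ring

theorem IsSidon.insert_of_notMem_collisionValues (hN : ConditionN c) {A : Finset ℤ}
    (hA : IsSidon c ↑A) {r : ℤ} (hr : r ∉ collisionValues c A) :
    IsSidon c ↑(insert r A) := by
  rcases A.eq_empty_or_nonempty with rfl | ⟨w, hw⟩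
  · intro u v hu hv _
    simp only [insert_empty, coe_singleton, Set.mem_singleton_iff] at hu hv
    exact funext fun i => (hu i).trans (hv i).symm
  intro u v hu hv huv
  obtain ⟨S, x, hx, rfl⟩ := exists_piecewise_eq_of_forall_mem_insert hw hu
  obtain ⟨T, y, hy, rfl⟩ := exists_piecewise_eq_of_forall_mem_insert hw hv
  by_cases hST : ∑ i ∈ S, c i = ∑ i ∈ T, c i
  · obtain rfl := hN.eq_of_sum_eq hST
    have hw_eq : S.piecewise (fun _ => w) x = S.piecewise (fun _ => w) y := by
      refine hA _ _ (fun i => ?_) (fun i => ?_) ?_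
      · by_cases hi : i ∈ S <;> simp [hi, hw, hx i]
      · by_cases hi : i ∈ S <;> simp [hi, hw, hy i]
      · rw [sum_mul_piecewise_const, sum_mul_piecewise_const] at huv ⊢
        linarith
    rw [← S.piecewise_idem_right _ (fun _ => w) x, hw_eq, piecewise_idem_right]
  · refine absurd (mem_image.mpr ⟨(x, y, S, T), ?_, (eq_collisionValue hST huv).symm⟩) hr
    simp [hx, hy]

theorem IsSidon.exists_insert_near (hh : 0 < h) (hN : ConditionN c) {A : Finset ℤ}
    (hA : IsSidon c ↑A) {k : ℕ} (hk : #A ≤ k) (b : ℤ) :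
    ∃ r ∉ A, |r - b| < ((k : ℤ) + 1) ^ (4 * h) ∧ IsSidon c ↑(insert r A) := by
  have hcard : #(A ∪ collisionValues c A) + 1 < 2 * (k + 1) ^ (4 * h) := calc
    _ ≤ #A + (4 * #A ^ 2) ^ h + 1 := by
      gcongr
      exact (card_union_le _ _).trans (by gcongr; exact card_collisionValues_le c A)
    _ ≤ k + (4 * k ^ 2) ^ h + 1 := by gcongr
    _ < _ := add_four_mul_sq_pow_add_one_lt hh k
  obtain ⟨r, hr, hrA⟩ := exists_abs_sub_lt_notMem b _ hcard
  rw [mem_union, not_or] at hrA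
  exact ⟨r, hrA.1, by exact_mod_cast hr, hA.insert_of_notMem_collisionValues hN hrA.2⟩

/-- For every sequence `b` of integers there is a sequence `a` of pairwise distinct
integers forming a φ-Sidon set with `|a_k - b_k| < k^(4h)` for all `k ≥ 1`.
(Sequences are indexed by `ℕ` starting at `0`, so index `k : ℕ` represents the
`(k+1)`-st term.) -/
theorem statement0 {h : ℕ} (hh : 0 < h) (c : Fin h → ℤ) (hN : ConditionN c)
    (b : ℕ → ℤ) :
    ∃ a : ℕ → ℤ, Function.Injective a ∧ IsSidon c (Set.range a) ∧
      ∀ k : ℕ, |a k - b k| < ((k : ℤ) + 1) ^ (4 * h) := by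
  obtain ⟨a, ha_inj, ha_near, ha_sidon⟩ :=
    exists_injective_greedy (P := fun A => IsSidon c ↑A) (by simpa using isSidon_empty c)
      fun k A hA hk => hA.exists_insert_near hh hN hk (b k)
  refine ⟨a, ha_inj, ?_, ha_near⟩
  rw [← Set.image_univ, ← Set.iUnion_Iio, Set.image_iUnion]
  refine isSidon_iUnion (fun j k hjk => Set.image_mono (Set.Iio_subset_Iio hjk)) fun k => ?_
  simpa using ha_sidon k
end

section
/- Let h be a positive integer, let φ(x_1,…,x_h) = c_1x_1 + ⋯ + c_hx_h be a linear form with integer coefficients satisfying condition N, and set C = Σ_{i=1}^h |c_i|. Let B = {b_1 < b_2 < ⋯} be a strictly increasing sequence of integers. If there exists ε > 0 such that b_t − b_s ≤ (t − s + 1)^(h−ε) for all positive integers t > s, then there do not exist a sequence a_1, a_2, … of pairwise distinct integers forming a φ-Sidon set A = {a_k : k ≥ 1} and a constant m_0 > 0 such that |a_k − b_k| < m_0 for all positive integers k (i.e., no φ-Sidon set of integers is a bounded perturbation of B). -/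
/-- If `B = {b₁ < b₂ < ⋯}` grows so slowly that `b_t - b_s ≤ (t-s+1)^(h-ε)` for all
`t > s`, then no φ-Sidon set of pairwise distinct integers is a bounded perturbation
of `B`.  (Sequences are indexed by `ℕ` starting at `0`.) -/
theorem statement1 {h : ℕ} (hh : 0 < h) (c : Fin h → ℤ) (hN : ConditionN c)
    (b : ℕ → ℤ) (hb : StrictMono b) (ε : ℝ) (hε : 0 < ε)
    (hgrow : ∀ s t : ℕ, s < t →
      ((b t - b s : ℤ) : ℝ) ≤ ((t - s + 1 : ℕ) : ℝ) ^ ((h : ℝ) - ε)) :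
    ¬ ∃ (a : ℕ → ℤ) (m₀ : ℝ), 0 < m₀ ∧ Function.Injective a ∧
        IsSidon c (Set.range a) ∧ ∀ k : ℕ, (|a k - b k| : ℝ) < m₀ := by
  rintro ⟨a, m₀, hm₀, hinj, hsid, hpert⟩
  classical
  -- coefficients are nonzero
  have hc : ∀ i, c i ≠ 0 := by
    intro i hci
    exact hN ⟨{i}, ∅, by simp, Or.inl ⟨i, Finset.mem_singleton_self i⟩, by simp [hci]⟩
  set C : ℤ := ∑ i, |c i| with hCdef
  have hC1 : (1 : ℤ) ≤ C := by
    calc (1:ℤ) ≤ |c ⟨0, hh⟩| := Int.one_le_abs (hc _)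
    _ ≤ C := Finset.single_le_sum (f := fun i => |c i|) (fun i _ => abs_nonneg _) (Finset.mem_univ _)
  have hCR : (1 : ℝ) ≤ (C : ℝ) := by exact_mod_cast hC1
  set D : ℝ := 2*(C:ℝ)*((|b 0| : ℤ) + m₀) + 1 with hDdef
  have hD0 : 0 < D := by
    have : (0:ℝ) ≤ ((|b 0| : ℤ) : ℝ) := by exact_mod_cast abs_nonneg (b 0)
    have h2 : (0:ℝ) ≤ 2*(C:ℝ)*((|b 0| : ℤ) + m₀) := by positivity
    linarith
  -- choose a large n
  have h1 : ∀ᶠ n : ℕ in Filter.atTop, 4*(C:ℝ) ≤ (n:ℝ)^ε :=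
    ((tendsto_rpow_atTop hε).comp tendsto_natCast_atTop_atTop).eventually_ge_atTop _
  have h2 : ∀ᶠ n : ℕ in Filter.atTop, 2*D+1 ≤ (n:ℝ) :=
    tendsto_natCast_atTop_atTop.eventually_ge_atTop _
  obtain ⟨n, hn2, hnε, hnD⟩ := ((Filter.eventually_ge_atTop 2).and (h1.and h2)).exists
  -- max of |a k|, k < n
  have hne : ((Finset.range n).image fun k => |a k|).Nonempty :=
    Finset.Nonempty.image ⟨0, Finset.mem_range.mpr (by omega)⟩ _
  set K : ℤ := ((Finset.range n).image fun k => |a k|).max' hne with hKdef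
  obtain ⟨k₀, hk₀n, hk₀⟩ := Finset.mem_image.mp (Finset.max'_mem _ hne)
  rw [Finset.mem_range] at hk₀n
  have hK : ∀ k, k < n → |a k| ≤ K := by
    intro k hk
    rw [hKdef]
    exact Finset.le_max' ((Finset.range n).image fun k => |a k|) (|a k|)
      (Finset.mem_image_of_mem _ (Finset.mem_range.mpr hk))
  have hK0 : 0 ≤ K := by rw [hKdef, ← hk₀]; exact abs_nonneg _
  -- counting
  have hcard : (n:ℤ)^h ≤ 2*C*K+1 := by
    have hmaps : ∀ f : Fin h → Fin n, (∑ i, c i * a (f i)) ∈ Finset.Icc (-(C*K)) (C*K) := by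
      intro f
      have habs : |∑ i, c i * a (f i)| ≤ C * K := by
        calc |∑ i, c i * a (f i)| ≤ ∑ i, |c i * a (f i)| := Finset.abs_sum_le_sum_abs _ _
        _ ≤ ∑ i, |c i| * K := by
            refine Finset.sum_le_sum fun i _ => ?_
            rw [abs_mul]
            exact mul_le_mul_of_nonneg_left (hK _ (f i).2) (abs_nonneg _)
        _ = C * K := by rw [← Finset.sum_mul]
      rw [Finset.mem_Icc]
      exact ⟨neg_le_of_abs_le habs, le_of_abs_le habs⟩
    have hinjF : Function.Injective (fun f : Fin h → Fin n => ∑ i, c i * a (f i)) := by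
      intro f g hfg
      have heq := hsid (fun i => a (f i)) (fun i => a (g i)) (fun i => ⟨_, rfl⟩)
        (fun i => ⟨_, rfl⟩) hfg
      funext i
      exact Fin.val_injective (hinj (congrFun heq i))
    have hle := Finset.card_le_card_of_injOn (s := Finset.univ) _ (fun f _ => hmaps f) hinjF.injOn
    rw [Finset.card_univ, Fintype.card_fun, Fintype.card_fin, Fintype.card_fin,
      Int.card_Icc] at hle
    have : ((n^h : ℕ) : ℤ) ≤ ((C*K + 1 - -(C*K)).toNat : ℤ) := by exact_mod_cast hle
    rw [Int.toNat_of_nonneg (by nlinarith)] at this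
    push_cast at this
    linarith
  -- bound K in ℝ
  have hKR : (K:ℝ) ≤ ((|b 0| : ℤ) : ℝ) + m₀ + (n:ℝ)^((h:ℝ)-ε) := by
    have hΔ : ((b (n-1) - b 0 : ℤ) : ℝ) ≤ (n:ℝ)^((h:ℝ)-ε) := by
      have := hgrow 0 (n-1) (by omega)
      have hn' : (n-1) - 0 + 1 = n := by omega
      rwa [hn'] at this
    have hΔ0 : (0:ℤ) ≤ b (n-1) - b 0 := by
      have := hb.monotone (Nat.zero_le (n-1)); omega
    have hbk : |b k₀| ≤ |b 0| + (b (n-1) - b 0) := by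
      have h1 : b k₀ ≤ b (n-1) := hb.monotone (by omega)
      have h2 : b 0 ≤ b k₀ := hb.monotone (Nat.zero_le _)
      rw [abs_le]
      constructor
      · have := neg_abs_le (b 0); omega
      · have := le_abs_self (b 0); omega
    have hak : (K:ℝ) ≤ ((|b k₀| : ℤ) : ℝ) + m₀ := by
      have h3 := hpert k₀
      rw [hKdef, ← hk₀]
      push_cast
      have h4 := abs_sub_abs_le_abs_sub ((a k₀ : ℝ)) ((b k₀ : ℝ))
      linarith
    have hbkR : ((|b k₀| : ℤ) : ℝ) ≤ ((|b 0| : ℤ) : ℝ) + ((b (n-1) - b 0 : ℤ) : ℝ) := by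
      exact_mod_cast hbk
    linarith
  -- final contradiction
  have hA : ((n:ℤ)^h : ℝ) = (n:ℝ)^((h:ℝ)) := by
    push_cast
    rw [Real.rpow_natCast]
  have hn0 : (0:ℝ) < (n:ℝ) := by exact_mod_cast (by omega : 0 < n)
  have hnR1 : (1:ℝ) ≤ (n:ℝ) := by exact_mod_cast (by omega : 1 ≤ n)
  set P : ℝ := (n:ℝ)^((h:ℝ)-ε) with hPdef
  have hP0 : 0 ≤ P := Real.rpow_nonneg hn0.le _
  have hPE : P * (n:ℝ)^ε = (n:ℝ)^(h:ℕ) := by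
    rw [hPdef, ← Real.rpow_natCast (n:ℝ) h, ← Real.rpow_add hn0]
    ring_nf
  have hcR : (n:ℝ)^h ≤ 2*(C:ℝ)*(K:ℝ)+1 := by exact_mod_cast hcard
  have hAn : (n:ℝ) ≤ (n:ℝ)^h := le_self_pow₀ hnR1 hh.ne'
  have key1 : (n:ℝ)^h ≤ D + 2*(C:ℝ)*P := by
    have hmul := mul_le_mul_of_nonneg_left hKR (show (0:ℝ) ≤ 2*(C:ℝ) by linarith)
    rw [hDdef]
    nlinarith
  have key2 : 4*(C:ℝ)*P ≤ (n:ℝ)^h := by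
    calc 4*(C:ℝ)*P = P * (4*(C:ℝ)) := by ring
    _ ≤ P * (n:ℝ)^ε := mul_le_mul_of_nonneg_left hnε hP0
    _ = (n:ℝ)^h := hPE
  have key3 : 2*D + 1 ≤ (n:ℝ)^h := le_trans hnD hAn
  linarith
end

section
/- Let h be a positive integer and let φ(x_1,…,x_h) = c_1x_1 + ⋯ + c_hx_h be a linear form with integer coefficients satisfying condition N. Let A be a φ-Sidon set of integers with exactly n elements (n ≥ 1). Then the number of integers b ∉ A such that A ∪ {b} is not a φ-Sidon set is less than 4^h · n^(2h−1). -/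
/-!
If `A ∪ {b}` is not Sidon, say `φ(a) = φ(a')` with `a ≠ a'` over `A ∪ {b}`, let `I`, `J` be
the positions where `a`, `a'` equal `b`. Replacing `b` by a fixed `a₀ ∈ A` gives tuples `f`, `g ∈ Aʰ` with `φ(f) + σ_I (b - a₀) = φ(g) + σ_J (b - a₀)`, where `σ_I = ∑_{i ∈ I} cᵢ`.
If `I = J` then `f = g` because `A` is Sidon, hence `a = a'`; so `I ≠ J`, and condition N gives
`σ_I ≠ σ_J`. Thus `b` is determined by `(I, J, f|_{Iᶜ}, g|_{Jᶜ})`: fewer than `4^h` choices of the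
pair and at most `n^(2h-1)` of the tuples, since `I` and `J` are not both empty.
-/

open Finset

theorem ConditionN.sum_ne_sum {h : ℕ} {c : Fin h → ℤ} (hN : ConditionN c)
    {I J : Finset (Fin h)} (hIJ : I ≠ J) : ∑ i ∈ I, c i ≠ ∑ i ∈ J, c i := by
  intro hsum
  refine hN ⟨I \ J, J \ I, disjoint_sdiff_sdiff, ?_, ?_⟩
  · by_contra! hempty
    simp only [sdiff_eq_empty_iff_subset] at hempty
    exact hIJ (hempty.1.antisymm hempty.2)
  · rw [← sub_eq_zero, sum_sdiff_sub_sum_sdiff, hsum, sub_self]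

theorem sum_mul_piecewise_const_sub {ι R : Type*} [Fintype ι] [DecidableEq ι] [CommRing R]
    (c f : ι → R) (I : Finset ι) (x y : R) :
    ∑ i, c i * I.piecewise (fun _ => x) f i - ∑ i, c i * I.piecewise (fun _ => y) f i
      = (∑ i ∈ I, c i) * (x - y) := by
  rw [← sum_sub_distrib, sum_mul, ← Fintype.sum_ite_mem I]
  refine Fintype.sum_congr _ _ fun i => ?_
  by_cases hi : i ∈ I <;> simp [hi, mul_sub]

section Pinned

variable {ι α : Type*} [Fintype ι] [DecidableEq ι]

def pinnedTuples (A : Finset α) (a₀ : α) (I : Finset ι) : Finset (ι → α) :=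
  Fintype.piFinset fun i => if i ∈ I then {a₀} else A

variable {A : Finset α} {a₀ : α} {I : Finset ι} {f : ι → α}

theorem card_pinnedTuples (A : Finset α) (a₀ : α) (I : Finset ι) :
    #(pinnedTuples A a₀ I) = #A ^ #Iᶜ := by
  simp only [pinnedTuples, Fintype.card_piFinset, apply_ite, card_singleton, prod_ite,
    filter_mem_eq_of_subset (subset_univ I), prod_const_one, prod_const, one_mul, ← compl_filter]

theorem mem_of_mem_pinnedTuples (ha₀ : a₀ ∈ A) (hf : f ∈ pinnedTuples A a₀ I) (i : ι) :
    f i ∈ A := by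
  have := Fintype.mem_piFinset.mp hf i
  split_ifs at this
  · rwa [mem_singleton.mp this]
  · exact this

theorem piecewise_eq_of_mem_pinnedTuples (hf : f ∈ pinnedTuples A a₀ I) :
    I.piecewise (fun _ => a₀) f = f := by
  ext i
  by_cases hi : i ∈ I
  · simpa [hi, eq_comm] using Fintype.mem_piFinset.mp hf i
  · simp [hi]

theorem exists_pinnedTuples_piecewise [DecidableEq α] {b : α} {a : ι → α}
    (ha : ∀ i, a i ∈ insert b (A : Set α)) :
    ∃ I : Finset ι, ∃ f ∈ pinnedTuples A a₀ I, a = I.piecewise (fun _ => b) f := by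
  refine ⟨univ.filter (a · = b), (univ.filter (a · = b)).piecewise (fun _ => a₀) a, ?_, ?_⟩
  · refine Fintype.mem_piFinset.mpr fun i => ?_
    by_cases hi : a i = b
    · simp [hi]
    · simpa [hi] using ha i
  · ext i
    by_cases hi : a i = b <;> simp [hi]

end Pinned

section Candidates

variable {h : ℕ}

/-- The solutions `b` of `φ(f) + σ_I (b - a₀) = φ(g) + σ_J (b - a₀)` over distinct `I`, `J` and
tuples `f`, `g` pinned to `a₀` on `I`, `J`. -/
def sidonCandidates (c : Fin h → ℤ) (A : Finset ℤ) (a₀ : ℤ) : Finset ℤ :=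
  (univ : Finset (Finset (Fin h))).offDiag.biUnion fun IJ =>
    (pinnedTuples A a₀ IJ.1 ×ˢ pinnedTuples A a₀ IJ.2).image fun fg =>
      a₀ + (∑ i, c i * fg.2 i - ∑ i, c i * fg.1 i) / (∑ i ∈ IJ.1, c i - ∑ i ∈ IJ.2, c i)

theorem mem_sidonCandidates_of_not_isSidon_insert {c : Fin h → ℤ} (hN : ConditionN c)
    {A : Finset ℤ} (hA : IsSidon c (A : Set ℤ)) {a₀ : ℤ} (ha₀ : a₀ ∈ A) {b : ℤ}
    (hb : ¬ IsSidon c (insert b (A : Set ℤ))) : b ∈ sidonCandidates c A a₀ := by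
  simp only [IsSidon, not_forall] at hb
  obtain ⟨a, a', ha, ha', hsum, hne⟩ := hb
  obtain ⟨I, f, hf, rfl⟩ := exists_pinnedTuples_piecewise (a₀ := a₀) ha
  obtain ⟨J, g, hg, rfl⟩ := exists_pinnedTuples_piecewise (a₀ := a₀) ha'
  have hφf := sum_mul_piecewise_const_sub c f I b a₀
  have hφg := sum_mul_piecewise_const_sub c g J b a₀
  rw [piecewise_eq_of_mem_pinnedTuples hf] at hφf
  rw [piecewise_eq_of_mem_pinnedTuples hg] at hφg
  have hIJ : I ≠ J := by
    rintro rfl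
    have hφ : ∑ i, c i * f i = ∑ i, c i * g i := by linear_combination hsum - hφf + hφg
    have hfg : f = g := hA f g (fun i => mem_coe.mpr (mem_of_mem_pinnedTuples ha₀ hf i))
      (fun i => mem_coe.mpr (mem_of_mem_pinnedTuples ha₀ hg i)) hφ
    exact hne (by rw [hfg])
  have hσ : ∑ i ∈ I, c i - ∑ i ∈ J, c i ≠ 0 := sub_ne_zero.mpr (hN.sum_ne_sum hIJ)
  have hsolve : ∑ i, c i * g i - ∑ i, c i * f i
      = (∑ i ∈ I, c i - ∑ i ∈ J, c i) * (b - a₀) := by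
    linear_combination -hsum + hφf - hφg
  simp only [sidonCandidates, mem_biUnion, mem_offDiag, mem_image, mem_product]
  refine ⟨(I, J), ⟨mem_univ _, mem_univ _, hIJ⟩, (f, g), ⟨hf, hg⟩, ?_⟩
  rw [hsolve, Int.mul_ediv_cancel_left _ hσ, add_sub_cancel]

theorem card_offDiag_finset_fin_lt : #(univ : Finset (Finset (Fin h))).offDiag < 4 ^ h := by
  rw [offDiag_card, card_univ, Fintype.card_finset, Fintype.card_fin, ← mul_pow]
  exact Nat.sub_lt (by positivity) (by positivity)

theorem card_pinnedTuples_mul_le {A : Finset ℤ} (hA : A.Nonempty) (a₀ : ℤ)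
    {I J : Finset (Fin h)} (hIJ : I ≠ J) :
    #(pinnedTuples A a₀ I) * #(pinnedTuples A a₀ J) ≤ #A ^ (2 * h - 1) := by
  have hIJ_pos : 0 < #I + #J := by
    by_contra! hzero
    exact hIJ (by rw [card_eq_zero.mp (by omega : #I = 0), card_eq_zero.mp (by omega : #J = 0)])
  rw [card_pinnedTuples, card_pinnedTuples, ← pow_add, card_compl, card_compl, Fintype.card_fin]
  refine Nat.pow_le_pow_right hA.card_pos ?_
  have hI : #I ≤ h := by simpa using card_le_univ I
  have hJ : #J ≤ h := by simpa using card_le_univ J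
  omega

theorem card_sidonCandidates_lt (c : Fin h → ℤ) {A : Finset ℤ} (hA : A.Nonempty) (a₀ : ℤ) :
    #(sidonCandidates c A a₀) < 4 ^ h * #A ^ (2 * h - 1) := by
  calc #(sidonCandidates c A a₀)
      ≤ ∑ IJ ∈ (univ : Finset (Finset (Fin h))).offDiag,
          #(pinnedTuples A a₀ IJ.1 ×ˢ pinnedTuples A a₀ IJ.2) :=
        card_biUnion_le.trans (sum_le_sum fun _ _ => card_image_le)
    _ ≤ ∑ _IJ ∈ (univ : Finset (Finset (Fin h))).offDiag, #A ^ (2 * h - 1) := by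
        refine sum_le_sum fun IJ hIJ => ?_
        rw [card_product]
        exact card_pinnedTuples_mul_le hA a₀ (mem_offDiag.mp hIJ).2.2
    _ < 4 ^ h * #A ^ (2 * h - 1) := by
        rw [sum_const, smul_eq_mul]
        exact Nat.mul_lt_mul_of_pos_right card_offDiag_finset_fin_lt (by positivity)

end Candidates

theorem statement9_general {h : ℕ} (c : Fin h → ℤ) (hN : ConditionN c)
    (A : Finset ℤ) (n : ℕ) (hn : 1 ≤ n) (hcard : A.card = n)
    (hSidon : IsSidon c (A : Set ℤ)) :
    {b : ℤ | b ∉ A ∧ ¬ IsSidon c (insert b (A : Set ℤ))}.Finite ∧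
      {b : ℤ | b ∉ A ∧ ¬ IsSidon c (insert b (A : Set ℤ))}.ncard
        < 4 ^ h * n ^ (2 * h - 1) := by
  obtain ⟨a₀, ha₀⟩ : A.Nonempty := card_pos.mp (by omega)
  have hsub : {b : ℤ | b ∉ A ∧ ¬ IsSidon c (insert b (A : Set ℤ))}
      ⊆ sidonCandidates c A a₀ := fun b hb =>
    mem_sidonCandidates_of_not_isSidon_insert hN hSidon ha₀ hb.2
  refine ⟨(sidonCandidates c A a₀).finite_toSet.subset hsub, ?_⟩
  calc _ ≤ #(sidonCandidates c A a₀) := by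
        simpa using Set.ncard_le_ncard hsub (sidonCandidates c A a₀).finite_toSet
    _ < 4 ^ h * n ^ (2 * h - 1) := hcard ▸ card_sidonCandidates_lt c ⟨a₀, ha₀⟩ a₀

/-- For a φ-Sidon set `A` with `n` elements, the set of integers `b ∉ A` such that
`A ∪ {b}` is not a φ-Sidon set is finite of size less than `4^h · n^(2h-1)`. -/
theorem statement9 {h : ℕ} (hh : 0 < h) (c : Fin h → ℤ) (hN : ConditionN c)
    (A : Finset ℤ) (n : ℕ) (hn : 1 ≤ n) (hcard : A.card = n)
    (hSidon : IsSidon c (A : Set ℤ)) :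
    {b : ℤ | b ∉ A ∧ ¬ IsSidon c (insert b (A : Set ℤ))}.Finite ∧
      {b : ℤ | b ∉ A ∧ ¬ IsSidon c (insert b (A : Set ℤ))}.ncard
        < 4 ^ h * n ^ (2 * h - 1) :=
  statement9_general c hN A n hn hcard hSidon
end
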